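/- Let n ≥ 1, let u ∈ [0,1]^{2n}, and let w ∈ ℝⁿ satisfy max{u_i + u_{n+i} − 1, 0} ≤ w_i ≤ min{u_i, u_{n+i}} for every i ∈ [n]. Define the symmetric (2n+1) × (2n+1) real matrix W (rows and columns indexed by {0} ∪ [2n]) by: W_{00} = 1; W_{0i} = W_{i0} = u_i for i ∈ [2n]; W_{ii} = u_i for i ∈ [2n]; W_{i, n+i} = W_{n+i, i} = w_i for i ∈ [n]; and W_{ik} = u_i u_k for all other pairs i ≠ k with i, k ∈ [2n]. Then W is positive semidefinite. -/

import Mathlib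

/-!
With `v = (1, u)`, the matrix `W` is `v vᵀ` plus a gap matrix that vanishes on row and column `0`
and, for each `i`, consists of the `2 × 2` block `[[x (1 - x), w - x y], [w - x y, y (1 - y)]]`
on the index pair `(i, n + i)`, where `(x, y, w) = (u i, u (n + i), w i)`. Each block is positive
semidefinite since the McCormick bounds give `(w - x y)² ≤ x (1 - x) · y (1 - y)`: for `w ≥ x y`,
`w - x y` is at most both `x (1 - y)` and `y (1 - x)`; for `w ≤ x y`, `x y - w` is at most both
`x y` and `(1 - x) (1 - y)`.
-/

open Matrix

theorem quadratic_nonneg_of_sq_le_mul {R : Type*} [Field R] [LinearOrder R] [IsStrictOrderedRing R]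
    {p q r : R} (hp : 0 ≤ p) (hr : 0 ≤ r) (hq : q ^ 2 ≤ p * r) (t s : R) :
    0 ≤ p * t ^ 2 + 2 * q * t * s + r * s ^ 2 := by
  rcases hp.eq_or_lt with rfl | hp
  · obtain rfl : q = 0 := by nlinarith [sq_nonneg q]
    nlinarith [sq_nonneg s]
  · -- `p * (p t² + 2 q t s + r s²) = (p t + q s)² + (p r - q²) s²`
    refine nonneg_of_mul_nonneg_right ?_ hp
    nlinarith [sq_nonneg (p * t + q * s), mul_nonneg (sub_nonneg.2 hq) (sq_nonneg s)]

namespace Matrix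

variable {ι : Type*} [Fintype ι]

theorem posSemidef_fromBlocks_diagonal [DecidableEq ι] {p q r : ι → ℝ} (hp : 0 ≤ p) (hr : 0 ≤ r)
    (hq : ∀ i, q i ^ 2 ≤ p i * r i) :
    (fromBlocks (diagonal p) (diagonal q) (diagonal q) (diagonal r)).PosSemidef := by
  refine .of_dotProduct_mulVec_nonneg ?_ fun x => ?_
  · simp [IsHermitian, fromBlocks_transpose]
  · rw [← Sum.elim_comp_inl_inr x, fromBlocks_mulVec, star_trivial, sumElim_dotProduct_sumElim]
    simp only [mulVec_diagonal, dotProduct, Pi.add_apply, Function.comp_apply, Sum.elim_inl,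
      Sum.elim_inr, ← Finset.sum_add_distrib]
    refine Finset.sum_nonneg fun i _ => ?_
    have := quadratic_nonneg_of_sq_le_mul (hp i) (hr i) (hq i) (x (.inl i)) (x (.inr i))
    linarith

variable {R : Type*} [Ring R] [PartialOrder R] [StarRing R]

def zeroBorder (B : Matrix ι ι R) : Matrix (Option ι) (Option ι) R :=
  of fun i j => Option.elim i 0 fun k => Option.elim j 0 (B k)

theorem PosSemidef.zeroBorder {B : Matrix ι ι R} (hB : B.PosSemidef) : B.zeroBorder.PosSemidef := by
  refine .of_dotProduct_mulVec_nonneg ?_ fun x => ?_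
  · ext (_ | i) (_ | j) <;> simp only [Matrix.zeroBorder, conjTranspose_apply, of_apply,
      Option.elim_none, Option.elim_some, star_zero]
    exact hB.isHermitian.apply i j
  · convert hB.dotProduct_mulVec_nonneg (x ∘ some) using 1
    simp [Matrix.zeroBorder, dotProduct, mulVec, Fintype.sum_option]

end Matrix

theorem mccormick_sq_le {x y w : ℝ} (hw₀ : 0 ≤ w) (hw₁ : x + y - 1 ≤ w) (hwx : w ≤ x)
    (hwy : w ≤ y) :
    (w - x * y) ^ 2 ≤ x * (1 - x) * (y * (1 - y)) := by
  rcases le_total (x * y) w with h | h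
  · have h₁ : w - x * y ≤ x * (1 - y) := by nlinarith
    have h₂ : w - x * y ≤ y * (1 - x) := by nlinarith
    nlinarith [mul_le_mul h₁ h₂ (by linarith) (by nlinarith)]
  · have h₂ : x * y - w ≤ (1 - x) * (1 - y) := by nlinarith
    nlinarith [mul_le_mul (by linarith : x * y - w ≤ x * y) h₂ (by linarith) (by nlinarith)]

section McCormick

variable {ι : Type*} [Fintype ι] [DecidableEq ι]

def mccormickGap (u : ι ⊕ ι → ℝ) (w : ι → ℝ) : Matrix (ι ⊕ ι) (ι ⊕ ι) ℝ :=
  fromBlocks (diagonal fun i => u (.inl i) * (1 - u (.inl i)))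
    (diagonal fun i => w i - u (.inl i) * u (.inr i))
    (diagonal fun i => w i - u (.inl i) * u (.inr i))
    (diagonal fun i => u (.inr i) * (1 - u (.inr i)))

theorem posSemidef_mccormickGap {u : ι ⊕ ι → ℝ} (hu : ∀ i, u i ∈ Set.Icc 0 1) {w : ι → ℝ}
    (hw : ∀ i, max (u (.inl i) + u (.inr i) - 1) 0 ≤ w i ∧ w i ≤ min (u (.inl i)) (u (.inr i))) :
    (mccormickGap u w).PosSemidef := by
  have hvar (k : ι ⊕ ι) : 0 ≤ u k * (1 - u k) := mul_nonneg (hu k).1 (sub_nonneg.2 (hu k).2)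
  refine posSemidef_fromBlocks_diagonal (fun i => hvar _) (fun i => hvar _) fun i => ?_
  obtain ⟨⟨hw₁, hw₀⟩, hwx, hwy⟩ : (_ ∧ _) ∧ _ ∧ _ :=
    ⟨max_le_iff.1 (hw i).1, le_min_iff.1 (hw i).2⟩
  exact mccormick_sq_le hw₀ hw₁ hwx hwy

end McCormick

theorem stmt_10 (n : ℕ)
    (u : Fin n ⊕ Fin n → ℝ) (hu : ∀ i, u i ∈ Set.Icc (0 : ℝ) 1)
    (w : Fin n → ℝ)
    (hw : ∀ i : Fin n,
      max (u (Sum.inl i) + u (Sum.inr i) - 1) 0 ≤ w i ∧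
      w i ≤ min (u (Sum.inl i)) (u (Sum.inr i)))
    (W : Matrix (Option (Fin n ⊕ Fin n)) (Option (Fin n ⊕ Fin n)) ℝ)
    (hW : ∀ i j, W i j =
      match i, j with
      | none, none => 1
      | none, some k => u k
      | some k, none => u k
      | some k, some l =>
          if k = l then u k
          else
            match k, l with
            | Sum.inl k', Sum.inr l' => if k' = l' then w k' else u k * u l
            | Sum.inr k', Sum.inl l' => if k' = l' then w l' else u k * u l
            | _, _ => u k * u l) :
    W.PosSemidef := by
  set v : Option (Fin n ⊕ Fin n) → ℝ := fun i => i.elim 1 u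
  have hdecomp : W = vecMulVec v v + (mccormickGap u w).zeroBorder := by
    ext (_ | i | i) (_ | j | j) <;>
      simp only [hW, v, vecMulVec, mccormickGap, zeroBorder, Matrix.add_apply, of_apply,
        Option.elim_none, Option.elim_some, one_mul, mul_one, add_zero, Sum.inl.injEq,
        Sum.inr.injEq, reduceCtorEq, ↓reduceIte, fromBlocks_apply₁₁, fromBlocks_apply₁₂,
        fromBlocks_apply₂₁, fromBlocks_apply₂₂, diagonal_apply] <;>
      split_ifs <;> subst_vars <;> ring
  rw [hdecomp]
  simpa using (posSemidef_vecMulVec_self_star v).add (posSemidef_mccormickGap hu hw).zeroBorder
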